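/- arXiv:2602.17356 — 2 statements merged into one kernel-verified Lean document; each statement's English description precedes it below -/
import Mathlib

section
/- Let V be a real vector space of dimension 2m+2 with a nondegenerate symmetric bilinear form g of Lorentzian signature (1, 2m+1), and let N be a complex subspace of the complexification V⊗ℂ of complex dimension m+1 that is totally null with respect to the ℂ-bilinear extension of g (i.e. N equals its own g-orthogonal complement in V⊗ℂ). Then N ∩ conj(N) is a complex line in V⊗ℂ, where conj denotes complex conjugation with respect to the real form V. -/
open TensorProduct

/-- The complex-conjugation map on the complexification `ℂ ⊗[ℝ] V`,
induced by complex conjugation on `ℂ`. -/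
noncomputable def complexificationConj (V : Type*) [AddCommGroup V] [Module ℝ V] :
    ℂ ⊗[ℝ] V →ₗ[ℝ] ℂ ⊗[ℝ] V :=
  TensorProduct.map Complex.conjAe.toLinearMap LinearMap.id

namespace RobinsonAux

variable {V : Type*} [AddCommGroup V] [Module ℝ V]

/-- The "real part" map of the complexification. -/
noncomputable def reT (V : Type*) [AddCommGroup V] [Module ℝ V] : ℂ ⊗[ℝ] V →ₗ[ℝ] V :=
  (TensorProduct.lid ℝ V).toLinearMap ∘ₗ TensorProduct.map Complex.reLm LinearMap.id

/-- The canonical inclusion `V → ℂ ⊗[ℝ] V`. -/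
noncomputable def iT (V : Type*) [AddCommGroup V] [Module ℝ V] : V →ₗ[ℝ] ℂ ⊗[ℝ] V :=
  TensorProduct.mk ℝ ℂ V 1

local notation "c" => complexificationConj V

lemma conj_tmul (z : ℂ) (v : V) : c (z ⊗ₜ v) = (starRingEnd ℂ z) ⊗ₜ v := rfl

lemma reT_tmul (z : ℂ) (v : V) : reT V (z ⊗ₜ v) = z.re • v := by simp [reT]

lemma iT_apply (v : V) : iT V v = (1:ℂ) ⊗ₜ v := rfl

lemma conj_conj (x : ℂ ⊗[ℝ] V) : c (c x) = x := by
  induction x using TensorProduct.induction_on with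
  | zero => simp
  | tmul z v => simp [conj_tmul]
  | add a b ha hb => simp [map_add, ha, hb]

lemma smul_tm (z w : ℂ) (v : V) : z • (w ⊗ₜ[ℝ] v) = (z * w) ⊗ₜ v := by
  rw [smul_tmul', smul_eq_mul]

lemma conj_smul (z : ℂ) (x : ℂ ⊗[ℝ] V) : c (z • x) = (starRingEnd ℂ z) • c x := by
  induction x using TensorProduct.induction_on with
  | zero => simp
  | tmul w v => rw [smul_tm, conj_tmul, conj_tmul, smul_tm, map_mul]
  | add a b ha hb => simp [smul_add, map_add, ha, hb]

lemma smul_iT (r : ℝ) (v : V) : (r:ℂ) • iT V v = iT V (r • v) := by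
  rw [iT_apply, iT_apply, smul_tm, ← TensorProduct.smul_tmul]
  congr 1

lemma add_conj_eq (x : ℂ ⊗[ℝ] V) : x + c x = (2:ℝ) • iT V (reT V x) := by
  induction x using TensorProduct.induction_on with
  | zero => simp
  | tmul z v =>
      rw [conj_tmul, reT_tmul, iT_apply, ← add_tmul, ← TensorProduct.smul_tmul,
        TensorProduct.smul_tmul']
      congr 1
      rw [Complex.add_conj, Complex.real_smul, Complex.real_smul]
      push_cast
      ring
  | add a b ha hb =>
      rw [map_add, map_add, map_add, smul_add, ← ha, ← hb]
      abel

lemma decomp_eq (x : ℂ ⊗[ℝ] V) :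
    x = iT V (reT V x) - Complex.I • iT V (reT V (Complex.I • x)) := by
  induction x using TensorProduct.induction_on with
  | zero => simp
  | tmul z v =>
      rw [smul_tm, reT_tmul, reT_tmul, iT_apply, iT_apply, ← TensorProduct.smul_tmul,
        ← TensorProduct.smul_tmul, smul_tm, ← sub_tmul]
      congr 1
      simp [Complex.real_smul, Complex.ext_iff]
  | add a b ha hb =>
      rw [smul_add, map_add, map_add, map_add, map_add, smul_add]
      nth_rewrite 1 [ha]; nth_rewrite 1 [hb]
      abel

section Bilin

variable (g : LinearMap.BilinForm ℝ V)

local notation "B" => LinearMap.BilinForm.baseChange ℂ g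

lemma B_iT (u w : V) : B (iT V u) (iT V w) = ((g u w : ℝ) : ℂ) := by
  show B ((1:ℂ) ⊗ₜ u) ((1:ℂ) ⊗ₜ w) = _
  rw [LinearMap.BilinForm.baseChange_tmul]
  simp [Complex.real_smul]

lemma B_conj_conj (x y : ℂ ⊗[ℝ] V) :
    B (c x) (c y) = (starRingEnd ℂ) (B x y) := by
  induction x using TensorProduct.induction_on with
  | zero => simp
  | tmul z v =>
      induction y using TensorProduct.induction_on with
      | zero => simp
      | tmul w u =>
          show B ((starRingEnd ℂ z) ⊗ₜ v) ((starRingEnd ℂ w) ⊗ₜ u) = _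
          rw [LinearMap.BilinForm.baseChange_tmul, LinearMap.BilinForm.baseChange_tmul]
          rw [← map_mul]
          simp [Complex.real_smul, map_mul]
      | add a b ha hb => simp only [map_add, ha, hb]
  | add a b ha hb => simp only [map_add, LinearMap.add_apply, ha, hb]

end Bilin

/-- Negativity of the Lorentzian form on the hyperplane where the 0-th coordinate vanishes. -/
lemma neg_on_hyperplane {n : ℕ} [NeZero n] (g : LinearMap.BilinForm ℝ V)
    (e : Module.Basis (Fin n) ℝ V)
    (he : ∀ i j, g (e i) (e j) = if i = j then (if i = (0 : Fin n) then 1 else -1) else 0)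
    (v : V) (h0 : e.repr v 0 = 0) (hv : v ≠ 0) : g v v < 0 := by
  classical
  set cf : Fin n → ℝ := fun i => e.repr v i with hcf
  have hvr : v = ∑ i, cf i • e i := (e.sum_repr v).symm
  have h1 : g v v = ∑ i, ∑ j, (cf i * cf j) * g (e i) (e j) := by
    conv_lhs => rw [hvr]
    simp only [map_sum, LinearMap.sum_apply, map_smul, LinearMap.smul_apply, smul_eq_mul,
      Finset.mul_sum]
    refine Finset.sum_congr rfl fun i _ => Finset.sum_congr rfl fun j _ => ?_
    by_cases h : i = j
    · subst h; ring
    · rw [he j i, he i j, if_neg (Ne.symm h), if_neg h]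
      ring
  have h2 : g v v = ∑ i, (cf i * cf i) * (if i = (0 : Fin n) then 1 else -1) := by
    rw [h1]
    refine Finset.sum_congr rfl fun i _ => ?_
    rw [Finset.sum_eq_single i]
    · rw [he, if_pos rfl]
    · intro j _ hj
      rw [he, if_neg (fun h => hj h.symm), mul_zero]
    · intro h; exact absurd (Finset.mem_univ i) h
  have h3 : g v v = -∑ i, cf i * cf i := by
    rw [h2, ← Finset.sum_neg_distrib]
    refine Finset.sum_congr rfl fun i _ => ?_
    by_cases hi : i = (0 : Fin n)
    · subst hi
      have : cf 0 = 0 := h0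
      rw [this]; ring
    · rw [if_neg hi]; ring
  have h4 : 0 < ∑ i, cf i * cf i := by
    have hne : e.repr v ≠ 0 := by
      intro h
      exact hv (by simpa [hcf, h] using hvr)
    obtain ⟨i, hi⟩ : ∃ i, cf i ≠ 0 := by
      by_contra h
      push_neg at h
      exact hne (Finsupp.ext h)
    refine Finset.sum_pos' (fun j _ => mul_self_nonneg _) ⟨i, Finset.mem_univ i, ?_⟩
    exact mul_self_pos.2 hi
  rw [h3]; linarith

end RobinsonAux

open RobinsonAux

set_option maxHeartbeats 1000000 in
/-- if `g` is a Lorentzian form of signature `(1, 2m+1)` on a real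
vector space `V` of dimension `2m+2` and `N` is a complex subspace of the
complexification `ℂ ⊗[ℝ] V` of complex dimension `m+1` which is totally null for
the ℂ-bilinear extension of `g` (equivalently `N^⊥ = N`), then `N ∩ conj N` is a
complex line. -/
theorem robinson_intersection_is_line (m : ℕ) (V : Type*) [AddCommGroup V] [Module ℝ V]
    [FiniteDimensional ℝ V] (hdim : Module.finrank ℝ V = 2 * m + 2)
    (g : LinearMap.BilinForm ℝ V)
    (hsym : ∀ x y : V, g x y = g y x)
    (hsig : ∃ e : Module.Basis (Fin (2 * m + 2)) ℝ V,
      ∀ i j, g (e i) (e j) = if i = j then (if i = (0 : Fin (2 * m + 2)) then 1 else -1) else 0)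
    (N : Submodule ℂ (ℂ ⊗[ℝ] V))
    (hrank : Module.finrank ℂ N = m + 1)
    (hnull : (LinearMap.BilinForm.baseChange ℂ g).orthogonal N = N) :
    Module.finrank ℂ
      ↥(N ⊓ Submodule.span ℂ (complexificationConj V '' (N : Set (ℂ ⊗[ℝ] V)))) = 1 := by
  classical
  obtain ⟨e, he⟩ := hsig
  set B := LinearMap.BilinForm.baseChange ℂ g with hB
  set c := complexificationConj V with hc
  set N' := Submodule.span ℂ (c '' (N : Set (ℂ ⊗[ℝ] V))) with hN'
  set D := N ⊓ N' with hD
  -- total nullity of N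
  have hBN : ∀ x ∈ N, ∀ y ∈ N, B x y = 0 := by
    intro x hx y hy
    have hy' : y ∈ B.orthogonal N := by rw [hnull]; exact hy
    exact (LinearMap.BilinForm.mem_orthogonal_iff.mp hy') x hx
  -- conjugation exchanges N and N'
  have hNc : ∀ x ∈ N, c x ∈ N' := fun x hx => Submodule.subset_span ⟨x, hx, rfl⟩
  have hcN : ∀ x ∈ N', c x ∈ N := by
    intro x hx
    induction hx using Submodule.span_induction with
    | mem x hx =>
        obtain ⟨n, hn, rfl⟩ := hx
        rw [hc, conj_conj]
        exact hn
    | zero => simp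
    | add a b _ _ ha hb => rw [map_add]; exact N.add_mem ha hb
    | smul z x _ hx =>
        rw [hc, conj_smul]
        exact N.smul_mem _ hx
  -- the key identity
  have key : ∀ x ∈ N, ∀ y ∈ N,
      ((4 * g (reT V x) (reT V y) : ℝ) : ℂ) = B x (c y) + B (c x) y := by
    intro x hx y hy
    have hz1 : B (c x) (c y) = 0 := by
      rw [hc, B_conj_conj, hBN x hx y hy, map_zero]
    have e1 : B (x + c x) (y + c y) = B x (c y) + B (c x) y := by
      simp only [map_add, LinearMap.add_apply]
      rw [hBN x hx y hy, hz1]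
      ring
    have e2 : B (x + c x) (y + c y) = ((4 * g (reT V x) (reT V y) : ℝ) : ℂ) := by
      rw [hc, add_conj_eq, add_conj_eq, LinearMap.map_smul_of_tower,
        LinearMap.map_smul_of_tower, LinearMap.smul_apply, smul_smul, B_iT,
        Complex.real_smul]
      push_cast
      ring
    rw [← e1, e2]
  -- Part 1 : D is at most one-dimensional
  haveI : FiniteDimensional ℂ (ℂ ⊗[ℝ] V) := inferInstance
  have hDnull : ∀ x ∈ D, ∀ y ∈ D, g (reT V x) (reT V y) = 0 := by
    intro x hx y hy
    have h := key x hx.1 y hy.1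
    rw [hBN x hx.1 (c y) (hcN y hy.2), hBN (c x) (hcN x hx.2) y hy.1, add_zero] at h
    have : (4 * g (reT V x) (reT V y) : ℝ) = 0 := by exact_mod_cast h
    linarith
  set W := Submodule.span ℝ (reT V '' (D : Set (ℂ ⊗[ℝ] V))) with hW
  have hWnull : ∀ w ∈ W, ∀ w' ∈ W, g w w' = 0 := by
    intro w hw
    induction hw using Submodule.span_induction with
    | mem w hwm =>
        intro w' hw'
        induction hw' using Submodule.span_induction with
        | mem w' hwm' =>
            obtain ⟨x, hx, rfl⟩ := hwm
            obtain ⟨y, hy, rfl⟩ := hwm'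
            exact hDnull x hx y hy
        | zero => simp
        | add a b _ _ ha hb => rw [map_add]; rw [ha, hb]; ring
        | smul r x _ hx => rw [LinearMap.map_smul, smul_eq_mul, hx]; ring
    | zero => intro w' _; simp
    | add a b _ _ ha hb =>
        intro w' hw'
        rw [map_add, LinearMap.add_apply, ha w' hw', hb w' hw']
        ring
    | smul r x _ hx =>
        intro w' hw'
        rw [LinearMap.map_smul, LinearMap.smul_apply, hx w' hw', smul_zero]
  have hWzero : ∀ w ∈ W, e.repr w 0 = 0 → w = 0 := by
    intro w hw h0
    by_contra hne
    have := neg_on_hyperplane g e he w h0 hne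
    rw [hWnull w hw w hw] at this
    linarith
  have hWrank : Module.finrank ℝ W ≤ 1 := by
    set L : W →ₗ[ℝ] ℝ := (e.coord 0) ∘ₗ W.subtype with hL
    have hker : LinearMap.ker L = ⊥ := by
      rw [LinearMap.ker_eq_bot']
      intro w hwL
      have : e.repr (w : V) 0 = 0 := by
        simpa [hL, Module.Basis.coord_apply] using hwL
      exact Subtype.ext (hWzero w w.2 this)
    have := LinearMap.finrank_range_add_finrank_ker L
    rw [hker, finrank_bot, add_zero] at this
    rw [← this]
    exact (Submodule.finrank_le _).trans (by simp)
  obtain ⟨w₀, hw₀⟩ : ∃ w₀ : V, W = Submodule.span ℝ {w₀} := by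
    have := (Submodule.finrank_le_one_iff_isPrincipal W).mp hWrank
    exact this.principal
  have hDle : D ≤ Submodule.span ℂ {iT V w₀} := by
    intro x hx
    have hx1 : reT V x ∈ W := Submodule.subset_span ⟨x, hx, rfl⟩
    have hx2 : reT V (Complex.I • x) ∈ W :=
      Submodule.subset_span ⟨Complex.I • x, D.smul_mem _ hx, rfl⟩
    rw [hw₀, Submodule.mem_span_singleton] at hx1 hx2
    obtain ⟨r, hr⟩ := hx1
    obtain ⟨r', hr'⟩ := hx2
    rw [Submodule.mem_span_singleton]
    refine ⟨(r : ℂ) - Complex.I * (r' : ℂ), ?_⟩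
    have := decomp_eq (V := V) x
    rw [← hr, ← hr', ← smul_iT, ← smul_iT] at this
    rw [this]
    rw [sub_smul, smul_smul]
  have hupper : Module.finrank ℂ D ≤ 1 := by
    refine le_trans (Submodule.finrank_mono hDle) ?_
    by_cases hw : iT V w₀ = 0
    · rw [hw, Submodule.span_zero_singleton, finrank_bot]
      omega
    · rw [finrank_span_singleton hw]
  -- Part 2 : D is nonzero
  have hlower : D ≠ ⊥ := by
    intro hbot
    -- injectivity of the real-part map on N
    have hinj : ∀ ξ ∈ N, reT V ξ = 0 → ξ = 0 := by
      intro ξ hξ h0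
      have h1 := add_conj_eq (V := V) ξ
      rw [h0, map_zero, smul_zero] at h1
      have h2 : c ξ = -ξ := by linear_combination (norm := abel) h1 - (add_comm ξ (c ξ))
      have h3 : -ξ ∈ N' := h2 ▸ hNc ξ hξ
      have h4 : ξ ∈ N' := by
        have := N'.neg_mem h3
        rwa [neg_neg] at this
      have hmem : ξ ∈ D := ⟨hξ, h4⟩
      rw [hbot] at hmem
      exact (Submodule.mem_bot ℂ).mp hmem
    -- negativity of g on real parts of elements of N
    have hneg : ∀ x ∈ N, x ≠ 0 → g (reT V x) (reT V x) < 0 := by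
      intro x hx hxne
      set a := reT V x with ha
      set b := reT V (Complex.I • x) with hb
      have hIx : Complex.I • x ∈ N := N.smul_mem _ hx
      set α := B x (c x) with hα
      have hgsymm : g.IsSymm := LinearMap.BilinForm.isSymm_def.2 fun u w => by simpa using hsym u w
      have hBsymm := LinearMap.BilinForm.IsSymm.baseChange (A := ℂ) (LinearMap.BilinForm.isSymm_iff.1 hgsymm)
      have hsymm : B (c x) x = α := by
        have := LinearMap.isSymm_def.1 hBsymm (c x) x
        simpa [hα, hB] using this
      have hαreal : (starRingEnd ℂ) α = α := by
        have : B (c x) (c (c x)) = (starRingEnd ℂ) α := by rw [hc, B_conj_conj]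
        rw [hc, conj_conj] at this
        rw [← this]
        rw [← hc]
        exact hsymm
      have hcI : c (Complex.I • x) = -(Complex.I • c x) := by
        rw [hc, conj_smul]
        simp [neg_smul]
      -- auxiliary B computations
      have hsmul1 : ∀ u w : ℂ ⊗[ℝ] V, B (Complex.I • u) w = Complex.I * B u w := by
        intro u w
        rw [map_smul, LinearMap.smul_apply, smul_eq_mul]
      have hsmul2 : ∀ u w : ℂ ⊗[ℝ] V, B u (Complex.I • w) = Complex.I * B u w := by
        intro u w
        rw [map_smul, smul_eq_mul]
      have hneg1 : ∀ u w : ℂ ⊗[ℝ] V, B (-u) w = -(B u w) := by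
        intro u w
        rw [map_neg, LinearMap.neg_apply]
      have c1 : B x (c (Complex.I • x)) = -(Complex.I * α) := by
        rw [hcI, map_neg, hsmul2, ← hα]
      have c2 : B (c (Complex.I • x)) x = -(Complex.I * α) := by
        rw [hcI, hneg1, hsmul1, hsymm]
      have c3 : B (Complex.I • x) (c (Complex.I • x)) = α := by
        rw [hsmul1, c1]
        linear_combination (-α) * Complex.I_mul_I
      have c4 : B (c (Complex.I • x)) (Complex.I • x) = α := by
        rw [hsmul2, c2]
        linear_combination (-α) * Complex.I_mul_I
      have c5 : B (c x) (Complex.I • x) = Complex.I * α := by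
        rw [hsmul2, hsymm]
      -- g a a
      have haa : ((4 * g a a : ℝ) : ℂ) = 2 * α := by
        have := key x hx x hx
        rw [← hα, hsymm] at this
        rw [this]; ring
      -- g a b = 0
      have hab : g a b = 0 := by
        have h2 := key x hx (Complex.I • x) hIx
        rw [c1, c5] at h2
        have h3 : ((4 * g a b : ℝ) : ℂ) = 0 := by rw [h2]; ring
        have : (4 * g a b : ℝ) = 0 := by exact_mod_cast h3
        linarith
      -- g b b = g a a
      have hbb : g b b = g a a := by
        have h2 := key (Complex.I • x) hIx (Complex.I • x) hIx
        rw [c3, c4] at h2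
        have h3 : ((4 * g b b : ℝ) : ℂ) = 2 * α := by rw [h2]; ring
        rw [← haa] at h3
        have : (4 * g b b : ℝ) = 4 * g a a := by exact_mod_cast h3
        linarith
      -- now find a null-coordinate combination
      have hane : a ≠ 0 := fun h => hxne (hinj x hx (ha ▸ h))
      by_cases hfa : e.repr a 0 = 0
      · exact neg_on_hyperplane g e he a hfa hane
      · set s : ℝ := e.repr b 0 with hs
        set t : ℝ := -(e.repr a 0) with ht
        set w : V := s • a + t • b with hwdef
        have hwcoord : e.repr w 0 = 0 := by
          have hw1 : e.repr w 0 = s * (e.repr a 0) + t * (e.repr b 0) := by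
            rw [hwdef]
            simp only [map_add, map_smul, Finsupp.add_apply, Finsupp.smul_apply, smul_eq_mul]
          rw [hw1, hs, ht]
          ring
        have hwne : w ≠ 0 := by
          intro hw0
          have hξ : ((s : ℂ) + (t : ℂ) * Complex.I) • x ∈ N := N.smul_mem _ hx
          have hre : reT V (((s : ℂ) + (t : ℂ) * Complex.I) • x) = w := by
            rw [add_smul, map_add, mul_smul]
            rw [Complex.coe_smul, Complex.coe_smul]
            exact congrArg₂ (· + ·) ((reT V).map_smul s x) ((reT V).map_smul t _)
          have := hinj _ hξ (by rw [hre, hw0])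
          rw [smul_eq_zero] at this
          rcases this with h | h
          · have : (s : ℂ) + (t : ℂ) * Complex.I = 0 := h
            have hts : t = 0 := by
              have := congrArg Complex.im this
              simpa using this
            rw [ht] at hts
            exact hfa (by linarith)
          · exact hxne h
        have hwneg := neg_on_hyperplane g e he w hwcoord hwne
        have hexp : g w w = (s * s + t * t) * g a a := by
          have hba : g b a = 0 := by rw [hsym b a]; exact hab
          rw [hwdef]
          simp only [map_add, map_smul, LinearMap.add_apply, LinearMap.smul_apply,
            smul_eq_mul]
          rw [hab, hbb, hba]
          ring
        rw [hexp] at hwneg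
        nlinarith [mul_self_nonneg s, mul_self_nonneg t]
    -- the real-part map is onto V
    haveI : FiniteDimensional ℂ ↥N := inferInstance
    set φ : ↥N →ₗ[ℝ] V := (reT V) ∘ₗ (N.subtype.restrictScalars ℝ) with hφ
    have hφinj : LinearMap.ker φ = ⊥ := by
      rw [LinearMap.ker_eq_bot']
      intro x hxφ
      exact Subtype.ext (hinj (x : ℂ ⊗[ℝ] V) x.2 hxφ)
    have hNr : Module.finrank ℝ ↥N = 2 * m + 2 := by
      have h1 : Module.finrank ℝ ℂ * Module.finrank ℂ ↥N = Module.finrank ℝ ↥N :=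
        Module.finrank_mul_finrank ℝ ℂ ↥N
      rw [hrank, Complex.finrank_real_complex] at h1
      omega
    haveI : FiniteDimensional ℝ ↥N := Module.Finite.trans ℂ _
    have hrange : LinearMap.range φ = ⊤ := by
      apply Submodule.eq_top_of_finrank_eq
      have := LinearMap.finrank_range_add_finrank_ker φ
      rw [hφinj, finrank_bot, add_zero] at this
      rw [this, hNr, hdim]
    obtain ⟨x₀, hx₀⟩ : ∃ x₀ : ↥N, φ x₀ = e 0 := by
      have : e 0 ∈ LinearMap.range φ := hrange ▸ Submodule.mem_top
      exact this
    have hx₀ne : (x₀ : ℂ ⊗[ℝ] V) ≠ 0 := by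
      intro h
      have : φ x₀ = 0 := by
        rw [hφ]
        simp only [LinearMap.comp_apply, LinearMap.restrictScalars_apply, Submodule.coe_subtype]
        rw [h, map_zero]
      rw [hx₀] at this
      exact e.ne_zero 0 this
    have := hneg (x₀ : ℂ ⊗[ℝ] V) x₀.2 hx₀ne
    have hre : reT V (x₀ : ℂ ⊗[ℝ] V) = e 0 := hx₀
    rw [hre] at this
    rw [he 0 0] at this
    simp at this
    linarith
  -- combine
  have hfin : Module.finrank ℂ D ≠ 0 := by
    intro h
    exact hlower ((Submodule.finrank_eq_zero (S := D)).mp h)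
  omega
end

section
/- Let (V,J) be a complex vector space and Q ∈ ⊗²(∧²V*) J-invariant with Q = Q⁺, and let Q^{Kl} be its Matsuo symmetrization. If X, Y ∈ V⊗ℂ both lie in the i-eigenspace V^{1,0} of J (or both lie in V^{0,1}), then Q^{Kl}(X,Y,Z,W) = 0 for all Z,W. In particular Q^{Kl} is a tensor of type (1,1) in each pair of arguments. -/
/-- the Matsuo symmetrization `Q^{Kl}` of a `J`-invariant tensor `Q = Q⁺`,
extended ℂ-multilinearly to the complexification `W` (here modelled as a ℂ-vector space `W`
with ℂ-linear `J`, `J² = −id`, and `Q` ℂ-homogeneous in each argument), vanishes whenever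
its first two arguments both lie in the `i`-eigenspace `V^{1,0}` of `J` (or both in
`V^{0,1}`).  In particular `Q^{Kl}` is of type `(1,1)` in each pair of arguments. -/
theorem Matsuo_Kl_type_one_one (W : Type*) [AddCommGroup W] [Module ℂ W]
    (J : W →ₗ[ℂ] W) (hJ : ∀ x : W, J (J x) = -x)
    (Q : W → W → W → W → ℂ)
    (hs1 : ∀ (c : ℂ) (X Y Z U : W), Q (c • X) Y Z U = c * Q X Y Z U)
    (hs2 : ∀ (c : ℂ) (X Y Z U : W), Q X (c • Y) Z U = c * Q X Y Z U)
    (hs3 : ∀ (c : ℂ) (X Y Z U : W), Q X Y (c • Z) U = c * Q X Y Z U)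
    (hs4 : ∀ (c : ℂ) (X Y Z U : W), Q X Y Z (c • U) = c * Q X Y Z U)
    (hA1 : ∀ X Y Z U : W, Q X Y Z U = -Q Y X Z U)
    (hA2 : ∀ X Y Z U : W, Q X Y Z U = -Q X Y U Z)
    (hJ12 : ∀ X Y Z U : W, Q (J X) (J Y) Z U = Q X Y Z U)
    (hJ34 : ∀ X Y Z U : W, Q X Y (J Z) (J U) = Q X Y Z U)
    (Qkl : W → W → W → W → ℂ)
    (hQkl : ∀ X Y Z U : W, Qkl X Y Z U =
      (1 / 8 : ℂ) * (2 * Q X Y Z U + 2 * Q Z U X Y + Q X Z Y U - Q Y Z X U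
        - Q X U Y Z + Q Y U X Z + Q (J X) Z (J Y) U - Q (J Y) Z (J X) U
        - Q (J X) U (J Y) Z + Q (J Y) U (J X) Z)) :
    (∀ X Y : W, J X = Complex.I • X → J Y = Complex.I • Y →
      ∀ Z U : W, Qkl X Y Z U = 0) ∧
    (∀ X Y : W, J X = -Complex.I • X → J Y = -Complex.I • Y →
      ∀ Z U : W, Qkl X Y Z U = 0) := by
  constructor <;>
  · intro X Y hx hy Z U
    have h1 : Q X Y Z U = 0 := by
      have h := hJ12 X Y Z U
      rw [hx, hy, hs1, hs2] at h
      linear_combination (-(1/2) : ℂ) * h + (Q X Y Z U / 2) * Complex.I_mul_I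
    have h2 : Q Z U X Y = 0 := by
      have h := hJ34 Z U X Y
      rw [hx, hy, hs3, hs4] at h
      linear_combination (-(1/2) : ℂ) * h + (Q Z U X Y / 2) * Complex.I_mul_I
    rw [hQkl]
    simp only [hx, hy, hs1, hs2, hs3, hs4, h1, h2]
    linear_combination ((Q X Z Y U - Q Y Z X U - Q X U Y Z + Q Y U X Z) / 8) * Complex.I_mul_I
end
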